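/- Fix t > 0. Let X be the normed vector space of all real double sequences β = (β_{l,k})_{l∈ℕ, k∈ℤ} with finite norm ‖β‖ := sup_{l∈ℕ, k∈ℤ} 2^{l(t+1/2)} |β_{l,k}|. Then the set N_t = { β ∈ X : there do not exist b > 0 and j₀ ∈ ℕ such that sup_{l ≥ j, k∈ℤ} 2^{l/2} |β_{l,k}| ≥ b · 2^{−jt} for all j ≥ j₀ } is nowhere dense in X (its closure has empty interior). -/
import Mathlib


noncomputable section

/-- The space of real double sequences `β = (β_{l,k})_{l∈ℕ,k∈ℤ}` with finite weighted
sup-norm `sup_{l,k} 2^{l(t+1/2)}|β_{l,k}|`. -/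
def SeqSpace (t : ℝ) : Type :=
  {β : ℕ × ℤ → ℝ //
    BddAbove (Set.range fun p : ℕ × ℤ => (2 : ℝ) ^ ((p.1 : ℝ) * (t + 1 / 2)) * |β p|)}

/-- The canonical embedding of `SeqSpace t` into the bounded functions on `ℕ × ℤ`,
`β ↦ (2^{l(t+1/2)} β_{l,k})_{l,k}`; it is an isometry onto its image for the weighted
sup-norm. -/
def SeqSpace.toBdd (t : ℝ) (β : SeqSpace t) : BoundedContinuousFunction (ℕ × ℤ) ℝ :=
  BoundedContinuousFunction.ofNormedAddCommGroupDiscrete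
    (fun p : ℕ × ℤ => (2 : ℝ) ^ ((p.1 : ℝ) * (t + 1 / 2)) * β.1 p)
    β.2.choose
    (by
      intro p
      have h2 : (0 : ℝ) < (2 : ℝ) ^ ((p.1 : ℝ) * (t + 1 / 2)) :=
        Real.rpow_pos_of_pos (by norm_num) _
      have := β.2.choose_spec (Set.mem_range_self p)
      calc ‖(2 : ℝ) ^ ((p.1 : ℝ) * (t + 1 / 2)) * β.1 p‖
          = (2 : ℝ) ^ ((p.1 : ℝ) * (t + 1 / 2)) * |β.1 p| := by
            rw [Real.norm_eq_abs, abs_mul, abs_of_pos h2]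
        _ ≤ β.2.choose := this)

theorem SeqSpace.toBdd_injective (t : ℝ) : Function.Injective (SeqSpace.toBdd t) := by
  intro β γ h
  apply Subtype.ext
  funext p
  have h2 : ((2 : ℝ) ^ ((p.1 : ℝ) * (t + 1 / 2))) ≠ 0 :=
    ne_of_gt (Real.rpow_pos_of_pos (by norm_num) _)
  have hp : (2 : ℝ) ^ ((p.1 : ℝ) * (t + 1 / 2)) * β.1 p =
      (2 : ℝ) ^ ((p.1 : ℝ) * (t + 1 / 2)) * γ.1 p := by
    have h' := congrFun (congrArg DFunLike.coe h) p
    rw [SeqSpace.toBdd, SeqSpace.toBdd,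
      BoundedContinuousFunction.coe_ofNormedAddCommGroupDiscrete,
      BoundedContinuousFunction.coe_ofNormedAddCommGroupDiscrete] at h'
    exact h'
  exact mul_left_cancel₀ h2 hp

/-- The metric on `SeqSpace t` induced by the weighted sup-norm
`‖β‖ = sup_{l,k} 2^{l(t+1/2)}|β_{l,k}|`. -/
instance (t : ℝ) : MetricSpace (SeqSpace t) :=
  MetricSpace.induced (SeqSpace.toBdd t) (SeqSpace.toBdd_injective t) inferInstance

/-- The exceptional set `N_t`: sequences for which there exist no `b > 0` and `j₀ ∈ ℕ` with
`sup_{l ≥ j, k} 2^{l/2}|β_{l,k}| ≥ b 2^{−jt}` for all `j ≥ j₀`. -/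
def exceptionalSet (t : ℝ) : Set (SeqSpace t) :=
  {β | ¬ ∃ b : ℝ, 0 < b ∧ ∃ j₀ : ℕ, ∀ j : ℕ, j₀ ≤ j →
    b * (2 : ℝ) ^ (-(j : ℝ) * t) ≤
      ⨆ p : {p : ℕ × ℤ // j ≤ p.1}, (2 : ℝ) ^ ((p.1.1 : ℝ) / 2) * |β.1 p.1|}

lemma SeqSpace.pointwise_dist_le (t : ℝ) (β γ : SeqSpace t) (p : ℕ × ℤ) :
    (2 : ℝ) ^ ((p.1 : ℝ) * (t + 1 / 2)) * |β.1 p - γ.1 p| ≤ dist β γ := by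
  have h := BoundedContinuousFunction.dist_coe_le_dist
    (f := SeqSpace.toBdd t β) (g := SeqSpace.toBdd t γ) p
  have hval : ∀ δ : SeqSpace t, (SeqSpace.toBdd t δ) p =
      (2 : ℝ) ^ ((p.1 : ℝ) * (t + 1 / 2)) * δ.1 p := by
    intro δ
    rw [SeqSpace.toBdd, BoundedContinuousFunction.coe_ofNormedAddCommGroupDiscrete]
  rw [hval, hval, Real.dist_eq, ← mul_sub, abs_mul,
    abs_of_pos (Real.rpow_pos_of_pos (by norm_num) _)] at h
  exact h

/-- for every `t > 0`, the set `N_t` is nowhere dense in the space of double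
sequences with finite weighted sup-norm `sup_{l,k} 2^{l(t+1/2)}|β_{l,k}|`. -/
theorem exceptionalSet_isNowhereDense (t : ℝ) (ht : 0 < t) :
    IsNowhereDense (exceptionalSet t) := by
  rw [IsNowhereDense, Set.eq_empty_iff_forall_notMem]
  intro x hx
  rw [mem_interior_iff_mem_nhds, Metric.mem_nhds_iff] at hx
  obtain ⟨ε, hε, hball⟩ := hx
  set δ : ℝ := ε / 2 with hδdef
  have hδ : 0 < δ := half_pos hε
  -- the perturbed weight function
  set c : ℕ → ℝ := fun l => (2 : ℝ) ^ (-((l : ℝ) * (t + 1 / 2))) with hc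
  have hcpos : ∀ l, 0 < c l := fun l => Real.rpow_pos_of_pos (by norm_num) _
  have hcmul : ∀ l : ℕ, (2 : ℝ) ^ ((l : ℝ) * (t + 1 / 2)) * c l = 1 := by
    intro l
    rw [hc, ← Real.rpow_add (by norm_num)]
    simp
  set g : ℕ × ℤ → ℝ := fun p =>
    x.1 p + (if p.2 = 0 then (if 0 ≤ x.1 p then δ * c p.1 else -(δ * c p.1)) else 0) with hg
  obtain ⟨M, hM⟩ := x.2
  have hMx : ∀ p : ℕ × ℤ, (2 : ℝ) ^ ((p.1 : ℝ) * (t + 1 / 2)) * |x.1 p| ≤ M := by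
    intro p; exact hM (Set.mem_range_self p)
  have hgbdd : BddAbove (Set.range fun p : ℕ × ℤ =>
      (2 : ℝ) ^ ((p.1 : ℝ) * (t + 1 / 2)) * |g p|) := by
    refine ⟨M + δ, ?_⟩
    rintro _ ⟨p, rfl⟩
    have h2 : (0 : ℝ) < (2 : ℝ) ^ ((p.1 : ℝ) * (t + 1 / 2)) :=
      Real.rpow_pos_of_pos (by norm_num) _
    have habs : |g p| ≤ |x.1 p| + δ * c p.1 := by
      rw [hg]
      refine le_trans (abs_add_le _ _) (add_le_add le_rfl ?_)
      split_ifs with h1 h2' <;> simp [abs_of_nonneg (mul_nonneg hδ.le (hcpos p.1).le),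
        abs_of_nonpos, mul_nonneg hδ.le (hcpos p.1).le]
    calc (2 : ℝ) ^ ((p.1 : ℝ) * (t + 1 / 2)) * |g p|
        ≤ (2 : ℝ) ^ ((p.1 : ℝ) * (t + 1 / 2)) * (|x.1 p| + δ * c p.1) := by
          exact mul_le_mul_of_nonneg_left habs h2.le
      _ = (2 : ℝ) ^ ((p.1 : ℝ) * (t + 1 / 2)) * |x.1 p| +
          δ * ((2 : ℝ) ^ ((p.1 : ℝ) * (t + 1 / 2)) * c p.1) := by ring
      _ ≤ M + δ * 1 := add_le_add (hMx p) (by rw [hcmul]; )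
      _ = M + δ := by ring
  set γ : SeqSpace t := ⟨g, hgbdd⟩ with hγ
  -- dist γ x ≤ δ
  have hdistγx : dist γ x ≤ δ := by
    have : dist (SeqSpace.toBdd t γ) (SeqSpace.toBdd t x) ≤ δ := by
      refine BoundedContinuousFunction.dist_le hδ.le |>.2 ?_
      intro p
      have hval : ∀ β : SeqSpace t, (SeqSpace.toBdd t β) p =
          (2 : ℝ) ^ ((p.1 : ℝ) * (t + 1 / 2)) * β.1 p := by
        intro β
        rw [SeqSpace.toBdd, BoundedContinuousFunction.coe_ofNormedAddCommGroupDiscrete]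
      rw [hval, hval, Real.dist_eq, ← mul_sub, abs_mul,
        abs_of_pos (Real.rpow_pos_of_pos (by norm_num) _)]
      have : γ.1 p - x.1 p = (if p.2 = 0 then
          (if 0 ≤ x.1 p then δ * c p.1 else -(δ * c p.1)) else 0) := by
        simp [hγ, hg]
      rw [this]
      split_ifs with h1 h2'
      · rw [abs_of_nonneg (mul_nonneg hδ.le (hcpos p.1).le)]
        calc (2 : ℝ) ^ ((p.1 : ℝ) * (t + 1 / 2)) * (δ * c p.1)
            = δ * ((2 : ℝ) ^ ((p.1 : ℝ) * (t + 1 / 2)) * c p.1) := by ring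
          _ = δ := by rw [hcmul]; ring
          _ ≤ δ := le_rfl
      · rw [abs_neg, abs_of_nonneg (mul_nonneg hδ.le (hcpos p.1).le)]
        calc (2 : ℝ) ^ ((p.1 : ℝ) * (t + 1 / 2)) * (δ * c p.1)
            = δ * ((2 : ℝ) ^ ((p.1 : ℝ) * (t + 1 / 2)) * c p.1) := by ring
          _ = δ := by rw [hcmul]; ring
          _ ≤ δ := le_rfl
      · simp [hδ.le]
    exact this
  have hγball : γ ∈ Metric.ball x ε := by
    rw [Metric.mem_ball]
    calc dist γ x ≤ δ := hdistγx
      _ < ε := by rw [hδdef]; linarith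
  have hγcl : γ ∈ closure (exceptionalSet t) := hball hγball
  rw [Metric.mem_closure_iff] at hγcl
  obtain ⟨β', hβ'N, hβ'dist⟩ := hγcl (δ / 2) (half_pos hδ)
  rw [dist_comm] at hβ'dist
  -- derive that β' satisfies the lower bound, contradicting β' ∈ N_t
  apply hβ'N
  refine ⟨δ / 2, half_pos hδ, 0, ?_⟩
  intro j _
  -- |γ_{j,0}| ≥ δ c j
  have hγlow : δ * c j ≤ |γ.1 (j, (0 : ℤ))| := by
    have : γ.1 (j, (0 : ℤ)) = x.1 (j, (0 : ℤ)) +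
        (if 0 ≤ x.1 (j, (0 : ℤ)) then δ * c j else -(δ * c j)) := by simp [hγ, hg]
    rw [this]
    split_ifs with h1
    · rw [abs_of_nonneg (by nlinarith [mul_nonneg hδ.le (hcpos j).le])]; nlinarith [mul_nonneg hδ.le (hcpos j).le]
    · push_neg at h1
      rw [abs_of_nonpos (by nlinarith [mul_nonneg hδ.le (hcpos j).le])]
      nlinarith [mul_nonneg hδ.le (hcpos j).le]
  -- |β'_{j,0}| ≥ (δ/2) c j
  have hpt := SeqSpace.pointwise_dist_le t β' γ (j, (0 : ℤ))
  have h2pos : (0 : ℝ) < (2 : ℝ) ^ ((j : ℝ) * (t + 1 / 2)) :=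
    Real.rpow_pos_of_pos (by norm_num) _
  have hdiff : |β'.1 (j, (0 : ℤ)) - γ.1 (j, (0 : ℤ))| ≤ (δ / 2) * c j := by
    have h1 : (2 : ℝ) ^ ((j : ℝ) * (t + 1 / 2)) *
        |β'.1 (j, (0 : ℤ)) - γ.1 (j, (0 : ℤ))| ≤ δ / 2 := le_trans hpt hβ'dist.le
    have h2 : |β'.1 (j, (0 : ℤ)) - γ.1 (j, (0 : ℤ))| ≤
        (δ / 2) / (2 : ℝ) ^ ((j : ℝ) * (t + 1 / 2)) := by
      rw [le_div_iff₀ h2pos]; linarith [h1]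
    calc |β'.1 (j, (0 : ℤ)) - γ.1 (j, (0 : ℤ))|
        ≤ (δ / 2) / (2 : ℝ) ^ ((j : ℝ) * (t + 1 / 2)) := h2
      _ = (δ / 2) * c j := by
          rw [hc, div_eq_mul_inv, ← Real.rpow_neg (by norm_num : (0:ℝ) ≤ 2)]
  have hβ'low : (δ / 2) * c j ≤ |β'.1 (j, (0 : ℤ))| := by
    have := abs_sub_abs_le_abs_sub (γ.1 (j, (0 : ℤ))) (β'.1 (j, (0 : ℤ)))
    rw [abs_sub_comm] at this
    linarith
  -- value at (j,0) bounds the sup from below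
  have hterm : δ / 2 * (2 : ℝ) ^ (-(j : ℝ) * t) ≤
      (2 : ℝ) ^ ((j : ℝ) / 2) * |β'.1 (j, (0 : ℤ))| := by
    have hhalf : (0 : ℝ) < (2 : ℝ) ^ ((j : ℝ) / 2) :=
      Real.rpow_pos_of_pos (by norm_num) _
    have hkey : (2 : ℝ) ^ ((j : ℝ) / 2) * c j = (2 : ℝ) ^ (-(j : ℝ) * t) := by
      rw [hc, ← Real.rpow_add (by norm_num)]
      ring_nf
    calc δ / 2 * (2 : ℝ) ^ (-(j : ℝ) * t)
        = (2 : ℝ) ^ ((j : ℝ) / 2) * ((δ / 2) * c j) := by rw [← hkey]; ring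
      _ ≤ (2 : ℝ) ^ ((j : ℝ) / 2) * |β'.1 (j, (0 : ℤ))| :=
          mul_le_mul_of_nonneg_left hβ'low hhalf.le
  refine le_trans hterm ?_
  -- boundedness of the sup family
  obtain ⟨M', hM'⟩ := β'.2
  have hbdd : BddAbove (Set.range fun p : {p : ℕ × ℤ // j ≤ p.1} =>
      (2 : ℝ) ^ ((p.1.1 : ℝ) / 2) * |β'.1 p.1|) := by
    refine ⟨M', ?_⟩
    rintro _ ⟨p, rfl⟩
    have hsplit : (2 : ℝ) ^ ((p.1.1 : ℝ) / 2) =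
        (2 : ℝ) ^ (-(p.1.1 : ℝ) * t) * (2 : ℝ) ^ ((p.1.1 : ℝ) * (t + 1 / 2)) := by
      rw [← Real.rpow_add (by norm_num)]
      ring_nf
    have hle1 : (2 : ℝ) ^ (-(p.1.1 : ℝ) * t) ≤ 1 := by
      apply Real.rpow_le_one_of_one_le_of_nonpos (by norm_num)
      have : (0 : ℝ) ≤ (p.1.1 : ℝ) := Nat.cast_nonneg _
      nlinarith
    calc (2 : ℝ) ^ ((p.1.1 : ℝ) / 2) * |β'.1 p.1|
        = (2 : ℝ) ^ (-(p.1.1 : ℝ) * t) *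
          ((2 : ℝ) ^ ((p.1.1 : ℝ) * (t + 1 / 2)) * |β'.1 p.1|) := by rw [hsplit]; ring
      _ ≤ 1 * ((2 : ℝ) ^ ((p.1.1 : ℝ) * (t + 1 / 2)) * |β'.1 p.1|) := by
          refine mul_le_mul_of_nonneg_right hle1 ?_
          positivity
      _ = (2 : ℝ) ^ ((p.1.1 : ℝ) * (t + 1 / 2)) * |β'.1 p.1| := one_mul _
      _ ≤ M' := hM' (Set.mem_range_self p.1)
  exact le_ciSup hbdd ⟨((j : ℕ), (0 : ℤ)), le_refl j⟩

end
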